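/- The multi-scale quantizer variance satisfies E[‖Q_{s̲}(v, W) − v‖₂²] ≤ (1 + min(n/ŝ², √n/ŝ))·W², where ŝ = min_{s ∈ s̲} s and W ≥ ‖v‖₂. -/

import Mathlib

/-!
Stochastic rounding of `x = (1 - p) a + p b` to `a` with probability `1 - p` and to `b` with
probability `p` has mean square error `p (1 - p) (b - a)²`; for coordinate `i` the two grid points
are `W sign(vᵢ) lᵢ / sᵢ` and `W sign(vᵢ) (lᵢ + 1) / sᵢ`, so the error is at most `pᵢ (W / sᵢ)²`.
Bounding `pᵢ ≤ 1` gives `(W / ŝ)²` per coordinate, hence `n W² / ŝ²`. Bounding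
`pᵢ ≤ lᵢ + pᵢ = sᵢ |vᵢ| / W` gives `W |vᵢ| / ŝ`, and Cauchy–Schwarz turns `∑ |vᵢ|` into
`√n ‖v‖₂ ≤ √n W`.
-/

open Finset

lemma two_point_variance (p a b : ℝ) :
    (1 - p) * (a - ((1 - p) * a + p * b)) ^ 2 + p * (b - ((1 - p) * a + p * b)) ^ 2
      = p * (1 - p) * (b - a) ^ 2 := by
  ring

lemma Real.sign_mul_abs (x : ℝ) : Real.sign x * |x| = x := by
  rcases lt_trichotomy x 0 with hx | rfl | hx
  · rw [Real.sign_of_neg hx, abs_of_neg hx]; ring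
  · simp
  · rw [Real.sign_of_pos hx, abs_of_pos hx, one_mul]

lemma Real.sign_sq_le_one (x : ℝ) : Real.sign x ^ 2 ≤ 1 := by
  rcases Real.sign_apply_eq x with h | h | h <;> rw [h] <;> norm_num

lemma sum_abs_le_sqrt_card_mul_sqrt_sum_sq {ι : Type*} (s : Finset ι) (f : ι → ℝ) :
    ∑ i ∈ s, |f i| ≤ √(#s : ℝ) * √(∑ i ∈ s, f i ^ 2) := by
  rw [← Real.sqrt_mul (Nat.cast_nonneg _)]
  apply Real.le_sqrt_of_sq_le
  simpa only [sq_abs] using sq_sum_le_card_mul_sum_sq (s := s) (f := fun i => |f i|)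

section SignedRounding

variable {W s m l p x : ℝ}

lemma signedRounding_variance_eq (hW : W ≠ 0) (hs : s ≠ 0) (hp : p = |x| / W * s - l) :
    (1 - p) * (W * Real.sign x * (l / s) - x) ^ 2
        + p * (W * Real.sign x * ((l + 1) / s) - x) ^ 2
      = p * (1 - p) * (W * Real.sign x / s) ^ 2 := by
  set a := W * Real.sign x * (l / s)
  set b := W * Real.sign x * ((l + 1) / s)
  have hba : b - a = W * Real.sign x / s := by simp only [a, b]; ring
  have hx : x = (1 - p) * a + p * b := by
    have habs : |x| = W * (l + p) / s := by rw [hp]; field_simp; ring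
    calc x = Real.sign x * |x| := (Real.sign_mul_abs x).symm
      _ = (1 - p) * a + p * b := by rw [habs]; simp only [a, b]; field_simp; ring
  rw [← hba, ← two_point_variance p a b, ← hx]

lemma signedRounding_variance_le (hW : 0 < W) (hs : 0 < s)
    (hlo : l / s ≤ |x| / W) (hhi : |x| / W ≤ (l + 1) / s) (hp : p = |x| / W * s - l) :
    (1 - p) * (W * Real.sign x * (l / s) - x) ^ 2
        + p * (W * Real.sign x * ((l + 1) / s) - x) ^ 2
      ≤ p * (W / s) ^ 2 := by
  have hp0 : 0 ≤ p := by
    rw [div_le_iff₀ hs] at hlo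
    linarith
  have hp1 : p ≤ 1 := by
    rw [le_div_iff₀ hs] at hhi
    linarith
  rw [signedRounding_variance_eq hW.ne' hs.ne' hp]
  have hsign : p * (1 - p) * Real.sign x ^ 2 ≤ p := by
    nlinarith [Real.sign_sq_le_one x, mul_nonneg hp0 (sub_nonneg.2 hp1)]
  calc p * (1 - p) * (W * Real.sign x / s) ^ 2 = p * (1 - p) * Real.sign x ^ 2 * (W / s) ^ 2 := by
        ring
    _ ≤ p * (W / s) ^ 2 := by gcongr

lemma signedRounding_variance_le_sq (hW : 0 < W) (hm : 0 < m) (hms : m ≤ s)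
    (hlo : l / s ≤ |x| / W) (hhi : |x| / W ≤ (l + 1) / s) (hp : p = |x| / W * s - l) :
    (1 - p) * (W * Real.sign x * (l / s) - x) ^ 2
        + p * (W * Real.sign x * ((l + 1) / s) - x) ^ 2
      ≤ (W / m) ^ 2 := by
  have hs : 0 < s := hm.trans_le hms
  have hp1 : p ≤ 1 := by
    rw [le_div_iff₀ hs] at hhi
    linarith
  calc _ ≤ p * (W / s) ^ 2 := signedRounding_variance_le hW hs hlo hhi hp
    _ ≤ 1 * (W / m) ^ 2 := by gcongr
    _ = (W / m) ^ 2 := one_mul _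

lemma signedRounding_variance_le_mul_abs (hW : 0 < W) (hm : 0 < m) (hms : m ≤ s) (hl : 0 ≤ l)
    (hlo : l / s ≤ |x| / W) (hhi : |x| / W ≤ (l + 1) / s) (hp : p = |x| / W * s - l) :
    (1 - p) * (W * Real.sign x * (l / s) - x) ^ 2
        + p * (W * Real.sign x * ((l + 1) / s) - x) ^ 2
      ≤ W / m * |x| := by
  have hs : 0 < s := hm.trans_le hms
  calc _ ≤ p * (W / s) ^ 2 := signedRounding_variance_le hW hs hlo hhi hp
    _ ≤ (l + p) * (W / s) ^ 2 := by gcongr; linarith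
    _ = W / s * |x| := by rw [hp]; field_simp; ring
    _ ≤ W / m * |x| := by gcongr

end SignedRounding

theorem qsgd_multiscale_variance_bound_general
    (n : ℕ) (S : Finset ℕ) (hSne : S.Nonempty) (hSpos : ∀ s ∈ S, 1 ≤ s)
    (v : Fin n → ℝ) (W : ℝ) (hW : 0 < W)
    (hWv : Real.sqrt (∑ i, v i ^ 2) ≤ W)
    (sstar : Fin n → ℕ) (hsstar : ∀ i, sstar i ∈ S)
    (l : Fin n → ℕ)
    (hlo : ∀ i, (l i : ℝ) / sstar i ≤ |v i| / W)
    (hhi : ∀ i, |v i| / W ≤ ((l i : ℝ) + 1) / sstar i)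
    (p : Fin n → ℝ) (hp : ∀ i, p i = |v i| / W * sstar i - l i) :
    ∑ i, ((1 - p i) * (W * Real.sign (v i) * ((l i : ℝ) / sstar i) - v i) ^ 2
          + p i * (W * Real.sign (v i) * (((l i : ℝ) + 1) / sstar i) - v i) ^ 2)
      ≤ (1 + min ((n : ℝ) / (S.min' hSne : ℝ) ^ 2) (Real.sqrt n / (S.min' hSne : ℝ)))
          * W ^ 2 := by
  set m : ℝ := ((S.min' hSne : ℕ) : ℝ)
  have hm : 0 < m := Nat.cast_pos.2 (hSpos _ (S.min'_mem hSne))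
  have hms : ∀ i, m ≤ sstar i := fun i => Nat.cast_le.2 (S.min'_le _ (hsstar i))
  calc _ ≤ min ((n : ℝ) / m ^ 2) (√n / m) * W ^ 2 := by
        rw [min_mul_of_nonneg _ _ (sq_nonneg W)]
        refine le_min ?_ ?_
        · calc _ ≤ ∑ _i : Fin n, (W / m) ^ 2 := sum_le_sum fun i _ =>
                signedRounding_variance_le_sq hW hm (hms i) (hlo i) (hhi i) (hp i)
            _ = n / m ^ 2 * W ^ 2 := by
                rw [sum_const, card_univ, Fintype.card_fin, nsmul_eq_mul]; ring
        · calc _ ≤ ∑ i, W / m * |v i| := sum_le_sum fun i _ =>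
                signedRounding_variance_le_mul_abs hW hm (hms i) (Nat.cast_nonneg _)
                  (hlo i) (hhi i) (hp i)
            _ = W / m * ∑ i, |v i| := (mul_sum _ _ _).symm
            _ ≤ W / m * (√n * W) := by
                gcongr
                simpa using (sum_abs_le_sqrt_card_mul_sqrt_sum_sq univ v).trans
                  (mul_le_mul_of_nonneg_left hWv (Real.sqrt_nonneg _))
            _ = √n / m * W ^ 2 := by ring
    _ ≤ (1 + min ((n : ℝ) / m ^ 2) (√n / m)) * W ^ 2 := by
        gcongr
        exact le_add_of_nonneg_left zero_le_one

open Finset in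
/-- Multi-scale quantizer variance bound:
`E[‖Q_{s̲}(v,W) - v‖₂²] ≤ (1 + min(n/ŝ², √n/ŝ))·W²` where `ŝ = min S` and
each coordinate is quantized with a scale `sstar i ∈ S`. -/
theorem qsgd_multiscale_variance_bound
    (n : ℕ) (S : Finset ℕ) (hSne : S.Nonempty) (hSpos : ∀ s ∈ S, 1 ≤ s)
    (v : Fin n → ℝ) (W : ℝ) (hW : 0 < W)
    (hWv : Real.sqrt (∑ i, v i ^ 2) ≤ W)
    (sstar : Fin n → ℕ) (hsstar : ∀ i, sstar i ∈ S)
    (l : Fin n → ℕ) (hls : ∀ i, l i < sstar i)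
    (hlo : ∀ i, (l i : ℝ) / sstar i ≤ |v i| / W)
    (hhi : ∀ i, |v i| / W ≤ ((l i : ℝ) + 1) / sstar i)
    (p : Fin n → ℝ) (hp : ∀ i, p i = |v i| / W * sstar i - l i) :
    ∑ i, ((1 - p i) * (W * Real.sign (v i) * ((l i : ℝ) / sstar i) - v i) ^ 2
          + p i * (W * Real.sign (v i) * (((l i : ℝ) + 1) / sstar i) - v i) ^ 2)
      ≤ (1 + min ((n : ℝ) / (S.min' hSne : ℝ) ^ 2) (Real.sqrt n / (S.min' hSne : ℝ)))
          * W ^ 2 :=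
  qsgd_multiscale_variance_bound_general n S hSne hSpos v W hW hWv sstar hsstar l hlo hhi p hp
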